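/- arXiv:1505.03442 — 4 statements merged into one kernel-verified Lean document; each statement's English description precedes it below -/
import Mathlib

section
/- For p ∈ [0,1] with p ≠ 1/2, the minimizer f* over ℝ of p·max(0, 1 - f) + (1-p)·max(0, 1 + f) satisfies sign(f*) = sign(p - 1/2). More precisely, any minimizer f* of this function satisfies f* > 0 if p > 1/2 and f* < 0 if p < 1/2. -/
/-- Fisher consistency of the hinge loss: any minimizer `f*` of the conditional hinge
risk `f ↦ p·max(0,1-f) + (1-p)·max(0,1+f)` satisfies `f* > 0` if `p > 1/2` and
`f* < 0` if `p < 1/2`. -/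
theorem stmt_7 (p : ℝ) (hp0 : 0 ≤ p) (hp1 : p ≤ 1) (hp : p ≠ 1 / 2) (fstar : ℝ)
    (hmin : ∀ f : ℝ,
      p * max 0 (1 - fstar) + (1 - p) * max 0 (1 + fstar) ≤
        p * max 0 (1 - f) + (1 - p) * max 0 (1 + f)) :
    (1 / 2 < p → 0 < fstar) ∧ (p < 1 / 2 → fstar < 0) := by
  have h1 := hmin 1
  have h2 := hmin (-1)
  norm_num at h1 h2
  have ha : (1 - fstar : ℝ) ≤ max 0 (1 - fstar) := le_max_right _ _
  have hb : (1 + fstar : ℝ) ≤ max 0 (1 + fstar) := le_max_right _ _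
  have ha0 : (0 : ℝ) ≤ max 0 (1 - fstar) := le_max_left _ _
  have hb0 : (0 : ℝ) ≤ max 0 (1 + fstar) := le_max_left _ _
  constructor
  · intro hgt
    by_contra h
    push_neg at h
    have hmf : max 0 (1 - fstar) = 1 - fstar := max_eq_right (by linarith)
    rw [hmf] at h1
    nlinarith
  · intro hlt
    by_contra h
    push_neg at h
    have hmf : max 0 (1 + fstar) = 1 + fstar := max_eq_right (by linarith)
    rw [hmf] at h2
    nlinarith
end

section
/- Let η_1, ..., η_K be nonnegative reals summing to 1 with all partial sums Σ_{ℓ=1}^{m} η_ℓ ≠ 1/2. For each k ∈ {1,...,K-1}, let f_k* be a minimizer of the k-th conditional hinge risk R_k(f) = (Σ_{ℓ=1}^{k} η_ℓ)·max(0, 1+f) + (Σ_{ℓ=k+1}^{K} η_ℓ)·max(0, 1-f). Then sign(f_k*) = sign(1/2 - Σ_{ℓ=1}^{k} η_ℓ) for all k, and moreover the sequence sign(f_1*), ..., sign(f_{K-1}*) is monotonically decreasing. -/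
/-!
For weights `a, b` the conditional hinge risk `a (1 + f)₊ + b (1 - f)₊` is piecewise linear
with value `2a` at `f = 1` and `2b` at `f = -1`. On `f ≤ 0` it is at least
`a (1 + f) + b (1 - f) = 2a + (b - a)(1 - f)`, which exceeds `2a` when `a < b`; so every
minimizer is positive when `a < b`, and, by the symmetry `f ↦ -f`, negative when `b < a`. With
`a = ∑_{ℓ ≤ k} η_ℓ` and `b = 1 - a` this is the sign claim, and monotonicity follows since the
partial sums increase and `sign` is monotone.
-/

namespace Real

theorem sign_monotone : Monotone Real.sign := by
  intro x y hxy
  simp only [Real.sign]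
  split_ifs <;> norm_num <;> linarith

theorem sign_mul_of_pos {c : ℝ} (hc : 0 < c) (r : ℝ) : Real.sign (c * r) = Real.sign r := by
  rcases lt_trichotomy r 0 with hr | rfl | hr
  · rw [sign_of_neg (mul_neg_of_pos_of_neg hc hr), sign_of_neg hr]
  · simp
  · rw [sign_of_pos (mul_pos hc hr), sign_of_pos hr]

end Real

def hingeRisk (a b f : ℝ) : ℝ := a * max 0 (1 + f) + b * max 0 (1 - f)

theorem hingeRisk_neg (a b f : ℝ) : hingeRisk a b (-f) = hingeRisk b a f := by
  simp only [hingeRisk, sub_neg_eq_add, ← sub_eq_add_neg]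
  ring

theorem pos_of_forall_hingeRisk_le {a b f : ℝ} (ha : 0 ≤ a) (hab : a < b)
    (hmin : ∀ g, hingeRisk a b f ≤ hingeRisk a b g) : 0 < f := by
  by_contra! hf
  have hle := hmin 1
  have hone : hingeRisk a b 1 = 2 * a := by norm_num [hingeRisk, mul_comm]
  have hlower : a * (1 + f) + b * (1 - f) ≤ hingeRisk a b f := by
    unfold hingeRisk
    rw [max_eq_right (by linarith : (0 : ℝ) ≤ 1 - f)]
    gcongr
    exact le_max_right _ _
  nlinarith

theorem neg_of_forall_hingeRisk_le {a b f : ℝ} (hb : 0 ≤ b) (hba : b < a)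
    (hmin : ∀ g, hingeRisk a b f ≤ hingeRisk a b g) : f < 0 := by
  have hmin' : ∀ g, hingeRisk b a (-f) ≤ hingeRisk b a g := fun g => by
    simpa only [hingeRisk_neg, neg_neg] using hmin (-g)
  exact neg_pos.1 (pos_of_forall_hingeRisk_le hb hba hmin')

theorem sign_eq_of_forall_hingeRisk_le {a b f : ℝ} (ha : 0 ≤ a) (hb : 0 ≤ b) (hab : a ≠ b)
    (hmin : ∀ g, hingeRisk a b f ≤ hingeRisk a b g) : Real.sign f = Real.sign (b - a) := by
  rcases hab.lt_or_gt with hlt | hgt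
  · rw [Real.sign_of_pos (pos_of_forall_hingeRisk_le ha hlt hmin),
      Real.sign_of_pos (sub_pos.2 hlt)]
  · rw [Real.sign_of_neg (neg_of_forall_hingeRisk_le hb hgt hmin),
      Real.sign_of_neg (sub_neg.2 hgt)]

-- Indices are shifted: `η ℓ` is the paper's `η_{ℓ+1}`.
/-- Generalized Fisher consistency of the sum-of-hinge-losses ordinal classifier:
each minimizer `f* k` of the k-th conditional hinge risk satisfies
`sign (f* k) = sign (1/2 - ∑_{ℓ=1}^k η_ℓ)`, and the sign sequence is monotonically
decreasing.  `η ℓ` (for `ℓ < K`) is the probability of class `ℓ + 1`. -/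
theorem stmt_9 (K : ℕ) (η : ℕ → ℝ) (hnn : ∀ ℓ < K, 0 ≤ η ℓ)
    (hsum : ∑ ℓ ∈ Finset.range K, η ℓ = 1)
    (hne : ∀ m, 1 ≤ m → m ≤ K - 1 → (∑ ℓ ∈ Finset.range m, η ℓ) ≠ 1 / 2)
    (fstar : ℕ → ℝ)
    (hmin : ∀ k, 1 ≤ k → k ≤ K - 1 → ∀ f : ℝ,
      (∑ ℓ ∈ Finset.range k, η ℓ) * max 0 (1 + fstar k) +
          (∑ ℓ ∈ Finset.Ico k K, η ℓ) * max 0 (1 - fstar k) ≤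
        (∑ ℓ ∈ Finset.range k, η ℓ) * max 0 (1 + f) +
          (∑ ℓ ∈ Finset.Ico k K, η ℓ) * max 0 (1 - f)) :
    (∀ k, 1 ≤ k → k ≤ K - 1 →
        Real.sign (fstar k) = Real.sign (1 / 2 - ∑ ℓ ∈ Finset.range k, η ℓ)) ∧
    (∀ k, 1 ≤ k → k + 1 ≤ K - 1 → Real.sign (fstar (k + 1)) ≤ Real.sign (fstar k)) := by
  have hsign : ∀ k, 1 ≤ k → k ≤ K - 1 →
      Real.sign (fstar k) = Real.sign (1 / 2 - ∑ ℓ ∈ Finset.range k, η ℓ) := by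
    intro k hk1 hkK
    set a := ∑ ℓ ∈ Finset.range k, η ℓ
    have hb : ∑ ℓ ∈ Finset.Ico k K, η ℓ = 1 - a := by
      rw [← hsum, ← Finset.sum_range_add_sum_Ico _ (by omega : k ≤ K), add_sub_cancel_left]
    have ha : 0 ≤ a := Finset.sum_nonneg fun ℓ hℓ => hnn ℓ (by simp at hℓ; omega)
    have hb_nonneg : 0 ≤ 1 - a :=
      hb ▸ Finset.sum_nonneg fun ℓ hℓ => hnn ℓ (by simp at hℓ; omega)
    have hab : a ≠ 1 - a := fun h => hne k hk1 hkK (by linarith)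
    have hkmin : ∀ g, hingeRisk a (1 - a) (fstar k) ≤ hingeRisk a (1 - a) g := by
      simpa only [hingeRisk, hb] using hmin k hk1 hkK
    rw [sign_eq_of_forall_hingeRisk_le ha hb_nonneg hab hkmin,
      show 1 - a - a = 2 * (1 / 2 - a) by ring, Real.sign_mul_of_pos two_pos]
  refine ⟨hsign, fun k hk1 hkK => ?_⟩
  rw [hsign k hk1 (by omega), hsign (k + 1) (by omega) hkK]
  refine Real.sign_monotone (sub_le_sub_left ?_ _)
  exact Finset.sum_le_sum_of_subset_of_nonneg (by simp) fun ℓ hℓ _ =>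
    hnn ℓ (by simp at hℓ; omega)
end

section
/- Let η_1, ..., η_K > 0 sum to 1 with Σ_{ℓ=1}^m η_ℓ ≠ 1/2 for all m. Let k* be the ordinal Bayes class (Σ_{ℓ<k*} η_ℓ < 1/2 < Σ_{ℓ≤k*} η_ℓ). Then k* minimizes over k ∈ {1,...,K} the aggregated binary 0-1 risk r(k) = Σ_{m=1}^{K-1} [𝟙(m ≥ k)·Σ_{ℓ>m} η_ℓ + 𝟙(m < k)·Σ_{ℓ≤m} η_ℓ]. -/
/-! The risk splits into one term per binary subproblem `m`, and `k*` minimises every term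
separately: the two possible costs of subproblem `m` are `F m` and `1 - F m`, where
`F m = ∑_{ℓ ≤ m} η_ℓ` is increasing, so `k*` votes for the cheaper side exactly because
`F m < 1/2` for `m < k*` and `F m > 1/2` for `m ≥ k*`. -/

open Finset

theorem ite_le_ite_of_optimal {α : Type*} [LinearOrder α] {P Q : Prop} [Decidable P]
    [Decidable Q] {a b : α} (hP : P → a ≤ b) (hnP : ¬P → b ≤ a) :
    (if P then a else b) ≤ if Q then a else b := by
  by_cases hp : P <;> by_cases hq : Q <;> simp [hp, hq, hP, hnP]

theorem sum_range_le_sum_range_of_nonneg {K : ℕ} {η : ℕ → ℝ} (hη : ∀ ℓ < K, 0 ≤ η ℓ)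
    {a b : ℕ} (hab : a ≤ b) (hbK : b ≤ K) :
    ∑ ℓ ∈ range a, η ℓ ≤ ∑ ℓ ∈ range b, η ℓ :=
  sum_le_sum_of_subset_of_nonneg (range_subset_range.mpr hab) fun ℓ hℓ _ ↦
    hη ℓ ((mem_range.mp hℓ).trans_le hbK)

/-- `η ℓ` is the probability of class `ℓ + 1`, so `range m` and `Ico m K` index the classes
`≤ m` and `> m`. -/
theorem stmt_18_general (K : ℕ) (η : ℕ → ℝ) (hpos : ∀ ℓ < K, 0 < η ℓ)
    (hsum : ∑ ℓ ∈ Finset.range K, η ℓ = 1)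
    (kstar : ℕ) (hk2 : kstar ≤ K)
    (hlo : (∑ ℓ ∈ Finset.range (kstar - 1), η ℓ) < 1 / 2)
    (hhi : 1 / 2 < ∑ ℓ ∈ Finset.range kstar, η ℓ) :
    ∀ k, 1 ≤ k → k ≤ K →
      (∑ m ∈ Finset.Icc 1 (K - 1),
          (if kstar ≤ m then ∑ ℓ ∈ Finset.Ico m K, η ℓ
           else ∑ ℓ ∈ Finset.range m, η ℓ)) ≤
      ∑ m ∈ Finset.Icc 1 (K - 1),
          (if k ≤ m then ∑ ℓ ∈ Finset.Ico m K, η ℓ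
           else ∑ ℓ ∈ Finset.range m, η ℓ) := by
  intro k _ _
  have hη : ∀ ℓ < K, 0 ≤ η ℓ := fun ℓ hℓ ↦ (hpos ℓ hℓ).le
  refine sum_le_sum fun m hm ↦ ?_
  have hmK : m ≤ K := (mem_Icc.mp hm).2.trans (K.sub_le 1)
  have hsplit := sum_range_add_sum_Ico η hmK
  refine ite_le_ite_of_optimal (fun hkm ↦ ?_) (fun hkm ↦ ?_)
  · have := sum_range_le_sum_range_of_nonneg hη hkm hmK
    linarith
  · have := sum_range_le_sum_range_of_nonneg hη (Nat.le_sub_one_of_lt (not_le.mp hkm))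
      ((kstar.sub_le 1).trans hk2)
    linarith

/-- The ordinal Bayes class `k*` minimizes the aggregated binary 0-1 risk
`r(k) = ∑_{m=1}^{K-1} [𝟙(m ≥ k)·∑_{ℓ>m} η_ℓ + 𝟙(m < k)·∑_{ℓ≤m} η_ℓ]`.
Here `η ℓ` (for `ℓ < K`) is the probability of class `ℓ + 1`, so
`∑_{ℓ≤m} η_ℓ = ∑_{ℓ ∈ range m} η ℓ` and `∑_{ℓ>m} η_ℓ = ∑_{ℓ ∈ Ico m K} η ℓ`. -/
theorem stmt_18 (K : ℕ) (η : ℕ → ℝ) (hpos : ∀ ℓ < K, 0 < η ℓ)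
    (hsum : ∑ ℓ ∈ Finset.range K, η ℓ = 1)
    (hne : ∀ m, 1 ≤ m → m ≤ K - 1 → (∑ ℓ ∈ Finset.range m, η ℓ) ≠ 1 / 2)
    (kstar : ℕ) (hk1 : 1 ≤ kstar) (hk2 : kstar ≤ K)
    (hlo : (∑ ℓ ∈ Finset.range (kstar - 1), η ℓ) < 1 / 2)
    (hhi : 1 / 2 < ∑ ℓ ∈ Finset.range kstar, η ℓ) :
    ∀ k, 1 ≤ k → k ≤ K →
      (∑ m ∈ Finset.Icc 1 (K - 1),
          (if kstar ≤ m then ∑ ℓ ∈ Finset.Ico m K, η ℓ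
           else ∑ ℓ ∈ Finset.range m, η ℓ)) ≤
      ∑ m ∈ Finset.Icc 1 (K - 1),
          (if k ≤ m then ∑ ℓ ∈ Finset.Ico m K, η ℓ
           else ∑ ℓ ∈ Finset.range m, η ℓ) :=
  stmt_18_general K η hpos hsum kstar hk2 hlo hhi
end

section
/- With the setup of the previous statement, the aggregated binary 0-1 risk satisfies r(k) = E[|k - Y|] where Y has distribution (η_1,...,η_K) on {1,...,K}; i.e., Σ_{m=1}^{K-1} [𝟙(m ≥ k)·Σ_{ℓ>m} η_ℓ + 𝟙(m < k)·Σ_{ℓ≤m} η_ℓ] = Σ_{ℓ=1}^{K} η_ℓ·|k - ℓ|. -/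
/-!
Here `η ℓ` is the probability of class `ℓ + 1`. For a true class `y` and a prediction `k`, the
`m`-th binary subproblem ("is the class `≤ m`?") is answered wrongly exactly when `m` lies
between `min k y` and `max k y - 1`, i.e. for `|k - y|` thresholds. Summing the inner sums of
the `m`-th risk over all classes and exchanging the two sums turns the aggregated risk into
`∑ η_y · |k - y|`.
-/

open Finset

theorem sum_sum_filter_comm {ι κ M : Type*} [AddCommMonoid M] (s : Finset ι) (t : Finset κ)
    (p : ι → κ → Prop) [∀ i j, Decidable (p i j)] (f : κ → M) :
    ∑ i ∈ s, ∑ j ∈ t with p i j, f j = ∑ j ∈ t, #{i ∈ s | p i j} • f j := by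
  simp only [sum_filter]
  rw [sum_comm]
  refine sum_congr rfl fun j _ => ?_
  rw [← sum_filter, sum_const]

theorem filter_threshold_disagree_eq_Ico {K k y : ℕ} (hk1 : 1 ≤ k) (hk2 : k ≤ K)
    (hy1 : 1 ≤ y) (hy2 : y ≤ K) :
    {m ∈ Icc 1 (K - 1) | ¬(k ≤ m ↔ y ≤ m)} = Ico (min k y) (max k y) := by
  ext m
  simp only [mem_filter, mem_Icc, mem_Ico, min_le_iff, lt_max_iff]
  omega

theorem card_threshold_disagree {K k y : ℕ} (hk1 : 1 ≤ k) (hk2 : k ≤ K)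
    (hy1 : 1 ≤ y) (hy2 : y ≤ K) :
    (#{m ∈ Icc 1 (K - 1) | ¬(k ≤ m ↔ y ≤ m)} : ℝ) = |(k : ℝ) - y| := by
  rw [filter_threshold_disagree_eq_Ico hk1 hk2 hy1 hy2, Nat.card_Ico,
    Nat.cast_sub min_le_max, Nat.cast_max, Nat.cast_min, max_sub_min_eq_abs, abs_sub_comm]

theorem binary_risk_eq_sum_filter_disagree (K : ℕ) (η : ℕ → ℝ) {k m : ℕ} (hm : m < K) :
    (if k ≤ m then ∑ ℓ ∈ Ico m K, η ℓ else ∑ ℓ ∈ range m, η ℓ) =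
      ∑ ℓ ∈ range K with ¬(k ≤ m ↔ ℓ + 1 ≤ m), η ℓ := by
  have hfilter : {ℓ ∈ range K | ¬(k ≤ m ↔ ℓ + 1 ≤ m)} = if k ≤ m then Ico m K else range m := by
    ext ℓ
    split_ifs <;> simp only [mem_filter, mem_range, mem_Ico] <;> omega
  rw [hfilter, apply_ite (fun s => ∑ ℓ ∈ s, η ℓ)]

theorem stmt_19_general (K : ℕ) (η : ℕ → ℝ)
    (k : ℕ) (hk1 : 1 ≤ k) (hk2 : k ≤ K) :
    (∑ m ∈ Finset.Icc 1 (K - 1),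
        (if k ≤ m then ∑ ℓ ∈ Finset.Ico m K, η ℓ
         else ∑ ℓ ∈ Finset.range m, η ℓ)) =
      ∑ ℓ ∈ Finset.range K, η ℓ * |(k : ℝ) - ((ℓ : ℝ) + 1)| := by
  rw [sum_congr rfl fun m hm =>
      binary_risk_eq_sum_filter_disagree K η (k := k) (by simp only [mem_Icc] at hm; omega),
    sum_sum_filter_comm]
  refine sum_congr rfl fun ℓ hℓ => ?_
  have hℓK : ℓ + 1 ≤ K := mem_range.mp hℓ
  rw [nsmul_eq_mul, card_threshold_disagree hk1 hk2 ℓ.succ_pos hℓK, Nat.cast_succ, mul_comm]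

/-- The aggregated binary 0-1 risk over the `K-1` ordinal subproblems equals the
expected absolute-distance loss: `r(k) = E[|k - Y|]` where `P(Y = ℓ+1) = η ℓ`.
`η ℓ` (for `ℓ < K`) is the probability of class `ℓ + 1`. -/
theorem stmt_19 (K : ℕ) (η : ℕ → ℝ) (hnn : ∀ ℓ < K, 0 ≤ η ℓ)
    (hsum : ∑ ℓ ∈ Finset.range K, η ℓ = 1)
    (k : ℕ) (hk1 : 1 ≤ k) (hk2 : k ≤ K) :
    (∑ m ∈ Finset.Icc 1 (K - 1),
        (if k ≤ m then ∑ ℓ ∈ Finset.Ico m K, η ℓ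
         else ∑ ℓ ∈ Finset.range m, η ℓ)) =
      ∑ ℓ ∈ Finset.range K, η ℓ * |(k : ℝ) - ((ℓ : ℝ) + 1)| :=
  stmt_19_general K η k hk1 hk2
end
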